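/- For ω ∈ ℝ³ with 0 < ‖ω‖ < 2π, the inverse tangent operator T⁻¹(ω) = I + (1/2) ω̃ + ((1 - γ(ω))/‖ω‖²) ω̃² with γ(ω) = (‖ω‖/2) cot(‖ω‖/2) satisfies T⁻¹(-ω) = T⁻¹(ω)ᵀ = T(ω)⁻ᵀ. -/

import Mathlib

/-!
Since `ω̃ᵀ = -ω̃` is the skew matrix of `-ω` and `‖-ω‖ = ‖ω‖`, transposing `T⁻¹(ω)` flips the sign
of its linear term only, which gives `T⁻¹(-ω) = T⁻¹(ω)ᵀ`. For the inverse, `ω̃³ = -‖ω‖² ω̃`, so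
products of matrices `I + a ω̃ + c ω̃²` are again of this form with explicit coefficients; for
`T⁻¹(ω) T(ω)` the two nonconstant coefficients vanish by the half-angle formulas, valid since
`sin (‖ω‖/2) ≠ 0` on `0 < ‖ω‖ < 2π`.
-/

open Matrix Real

noncomputable def norm3 (ω : Fin 3 → ℝ) : ℝ := Real.sqrt (ω 0 ^ 2 + ω 1 ^ 2 + ω 2 ^ 2)

def skew (ω : Fin 3 → ℝ) : Matrix (Fin 3) (Fin 3) ℝ :=
  !![0, -ω 2, ω 1; ω 2, 0, -ω 0; -ω 1, ω 0, 0]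


noncomputable def Tso (ω : Fin 3 → ℝ) : Matrix (Fin 3) (Fin 3) ℝ :=
  1 - (2 * (1 - Real.cos (norm3 ω)) / norm3 ω ^ 2 / 2) • skew ω
    + ((1 - Real.sin (norm3 ω) / norm3 ω) / norm3 ω ^ 2) • (skew ω ^ 2)


noncomputable def Tinv (ω : Fin 3 → ℝ) : Matrix (Fin 3) (Fin 3) ℝ :=
  1 + (1 / 2 : ℝ) • skew ω
    + ((1 - norm3 ω / 2 * Real.cot (norm3 ω / 2)) / norm3 ω ^ 2) • (skew ω ^ 2)

section CubicRelation

variable {K A : Type*} [CommRing K] [Ring A] [Algebra K A]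

theorem one_add_smul_add_smul_sq_mul {S : A} {t : K} (hS : S ^ 3 = -t • S) (a b c d : K) :
    (1 + a • S + c • S ^ 2) * (1 + b • S + d • S ^ 2) =
      1 + (a + b - t * (a * d + c * b)) • S + (c + d + a * b - t * (c * d)) • S ^ 2 := by
  have hS4 : S ^ 4 = -t • S ^ 2 := by
    rw [pow_succ, hS, smul_mul_assoc, ← pow_two]
  have expand : (1 + a • S + c • S ^ 2) * (1 + b • S + d • S ^ 2) =
      1 + (a + b) • S + (c + d + a * b) • S ^ 2 + (a * d + c * b) • S ^ 3 + (c * d) • S ^ 4 := by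
    simp only [add_mul, mul_add, one_mul, mul_one, smul_mul_smul, ← pow_two, ← pow_succ,
      ← pow_succ', ← pow_mul, Nat.reduceAdd]
    module
  rw [expand, hS, hS4, smul_smul, smul_smul]
  module

end CubicRelation

lemma norm3_neg (ω : Fin 3 → ℝ) : norm3 (-ω) = norm3 ω := by
  simp [norm3]

lemma norm3_sq (ω : Fin 3 → ℝ) : norm3 ω ^ 2 = ω 0 ^ 2 + ω 1 ^ 2 + ω 2 ^ 2 :=
  Real.sq_sqrt (by positivity)

lemma skew_neg (ω : Fin 3 → ℝ) : skew (-ω) = (skew ω)ᵀ := by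
  ext i j
  fin_cases i <;> fin_cases j <;> simp [skew]

lemma skew_pow_three (ω : Fin 3 → ℝ) : skew ω ^ 3 = -(norm3 ω ^ 2) • skew ω := by
  rw [norm3_sq]
  ext i j
  fin_cases i <;> fin_cases j <;>
    simp [skew, pow_succ, Matrix.mul_apply, Fin.sum_univ_three] <;> ring

lemma Tinv_neg_eq_transpose (ω : Fin 3 → ℝ) : Tinv (-ω) = (Tinv ω)ᵀ := by
  simp only [Tinv, norm3_neg, skew_neg, transpose_add, transpose_one, transpose_smul,
    transpose_pow]

/-- With `θ = ‖ω‖`, the coefficients of `ω̃` and `ω̃²` in `T⁻¹(ω) T(ω)` vanish. -/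
lemma tangent_coeffs_inverse {θ : ℝ} (hθ : θ ≠ 0) (hs : sin (θ / 2) ≠ 0) :
    let b := -(2 * (1 - cos θ) / θ ^ 2 / 2)
    let c := (1 - θ / 2 * cot (θ / 2)) / θ ^ 2
    let d := (1 - sin θ / θ) / θ ^ 2
    1 / 2 + b - θ ^ 2 * (1 / 2 * d + c * b) = 0 ∧ c + d + 1 / 2 * b - θ ^ 2 * (c * d) = 0 := by
  have hsin : sin θ = 2 * sin (θ / 2) * cos (θ / 2) := by
    rw [← sin_two_mul]; ring_nf
  have hcos : cos θ = 1 - 2 * sin (θ / 2) ^ 2 := by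
    rw [← cos_two_mul_eq_one_sub]; ring_nf
  intro b c d
  simp only [b, c, d, cot_eq_cos_div_sin, hsin, hcos]
  constructor
  · field_simp
    ring
  · field_simp
    linear_combination (-(2 * θ * sin (θ / 2))) * sin_sq_add_cos_sq (θ / 2)

lemma Tinv_mul_Tso_eq_one (ω : Fin 3 → ℝ) (h0 : norm3 ω ≠ 0) (hs : sin (norm3 ω / 2) ≠ 0) :
    Tinv ω * Tso ω = 1 := by
  obtain ⟨e1, e2⟩ := tangent_coeffs_inverse h0 hs
  rw [Tinv, Tso, sub_eq_add_neg (1 : Matrix (Fin 3) (Fin 3) ℝ), ← neg_smul,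
    one_add_smul_add_smul_sq_mul (skew_pow_three ω), e1, e2, zero_smul, zero_smul, add_zero,
    add_zero]

theorem tinv_neg (ω : Fin 3 → ℝ) (h0 : 0 < norm3 ω) (h2 : norm3 ω < 2 * Real.pi) :
    Tinv (-ω) = (Tinv ω)ᵀ ∧ (Tinv ω)ᵀ = ((Tso ω)ᵀ)⁻¹ := by
  have hs : sin (norm3 ω / 2) ≠ 0 := (sin_pos_of_pos_of_lt_pi (by linarith) (by linarith)).ne'
  have h : (Tso ω)ᵀ * (Tinv ω)ᵀ = 1 := by
    rw [← transpose_mul, Tinv_mul_Tso_eq_one ω h0.ne' hs, transpose_one]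
  exact ⟨Tinv_neg_eq_transpose ω, (inv_eq_right_inv h).symm⟩
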